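/- Let p > q ≥ 1 be coprime integers and suppose p/q = [c_1, …, c_n]^- with integers c_i ≥ 2 for all i. Let q^* be the unique integer with 1 ≤ q^* < p and q·q^* ≡ 1 (mod p). Then p/q^* = [c_n, c_{n−1}, …, c_1]^-. -/

import Mathlib

/-!
With `M(c) = !![c, -1; 1, 0]` (the Möbius map `x ↦ c - 1/x`), the product `M(c₁)⋯M(cₙ)` is
`!![a, B; b, D]` with `[c₁, …, cₙ]⁻ = a/b` and `aD - Bb = 1`; so `a/b` is reduced and `(a, b) = (p, q)`.
Conjugation by `J = diag(1, -1)` transposes every `M(c)`, so `M(cₙ)⋯M(c₁) = J (M(c₁)⋯M(cₙ))ᵀ J`,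
whose first column is `(p, -B)`: hence `[cₙ, …, c₁]⁻ = p/(-B)`. The determinant gives
`q·(-B) ≡ 1 (mod p)`, and `cᵢ ≥ 2` keeps every first column `(x, y)` in the range `0 ≤ y < x`,
so `-B = q*`.
-/

/-- Negative continued fraction `[c₁, …, cₙ]⁻ = c₁ - 1/[c₂, …, cₙ]⁻` of a
finite sequence of rationals (junk value `0` on the empty list). -/
def negCF : List ℚ → ℚ
  | [] => 0
  | [c] => c
  | c :: d :: t => c - 1 / negCF (d :: t)

/-- Also true for `t = []`, since `negCF [] = 0` and `1 / 0 = 0`. -/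
theorem negCF_cons (c : ℚ) (t : List ℚ) : negCF (c :: t) = c - 1 / negCF t := by
  cases t <;> simp [negCF]

theorem Int.eq_of_mul_modEq_one {p q x y : ℤ} (hcop : IsCoprime p q)
    (hx : q * x ≡ 1 [ZMOD p]) (hy : q * y ≡ 1 [ZMOD p])
    (hx0 : 0 ≤ x) (hxp : x < p) (hy0 : 0 ≤ y) (hyp : y < p) : x = y := by
  have hdvd : p ∣ q * (y - x) := by
    rw [mul_sub]
    exact (hx.trans hy.symm).dvd
  have hxy : x ≡ y [ZMOD p] := Int.modEq_iff_dvd.mpr (hcop.dvd_of_dvd_mul_left hdvd)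
  rwa [Int.ModEq, Int.emod_eq_of_lt hx0 hxp, Int.emod_eq_of_lt hy0 hyp] at hxy

open Matrix

def negCFStep (c : ℤ) : Matrix (Fin 2) (Fin 2) ℤ := !![c, -1; 1, 0]

def negCFMat (l : List ℤ) : Matrix (Fin 2) (Fin 2) ℤ := (l.map negCFStep).prod

def signFlip : Matrix (Fin 2) (Fin 2) ℤ := !![1, 0; 0, -1]

@[simp] theorem negCFMat_nil : negCFMat [] = 1 := rfl

theorem negCFMat_cons (c : ℤ) (t : List ℤ) :
    negCFMat (c :: t) = negCFStep c * negCFMat t := rfl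

theorem negCFMat_append_singleton (l : List ℤ) (c : ℤ) :
    negCFMat (l ++ [c]) = negCFMat l * negCFStep c := by
  simp [negCFMat]

theorem negCFMat_cons_col_zero (c : ℤ) (t : List ℤ) :
    negCFMat (c :: t) 0 0 = c * negCFMat t 0 0 - negCFMat t 1 0 ∧
      negCFMat (c :: t) 1 0 = negCFMat t 0 0 := by
  simp [negCFMat_cons, negCFStep, mul_apply, Fin.sum_univ_two]
  ring

theorem det_negCFMat (l : List ℤ) : (negCFMat l).det = 1 := by
  induction l with
  | nil => simp
  | cons c t ih => rw [negCFMat_cons, det_mul, ih, negCFStep, det_fin_two_of]; ring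

theorem signFlip_mul_self : signFlip * signFlip = 1 := by
  ext i j; fin_cases i <;> fin_cases j <;> simp [signFlip]

theorem transpose_negCFStep (c : ℤ) :
    (negCFStep c)ᵀ = signFlip * negCFStep c * signFlip := by
  ext i j; fin_cases i <;> fin_cases j <;> simp [signFlip, negCFStep, mul_apply, Fin.sum_univ_two]

theorem negCFMat_reverse (l : List ℤ) :
    negCFMat l.reverse = signFlip * (negCFMat l)ᵀ * signFlip := by
  induction l with
  | nil => simp [signFlip_mul_self]
  | cons c t ih =>
    rw [List.reverse_cons, negCFMat_append_singleton, ih, negCFMat_cons, transpose_mul,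
      transpose_negCFStep]
    simp only [Matrix.mul_assoc, signFlip_mul_self, Matrix.mul_one]

theorem negCFMat_reverse_zero_zero (l : List ℤ) :
    negCFMat l.reverse 0 0 = negCFMat l 0 0 := by
  rw [negCFMat_reverse]
  simp [signFlip, mul_apply, vecMul, dotProduct, Fin.sum_univ_two]

theorem negCFMat_reverse_one_zero (l : List ℤ) :
    negCFMat l.reverse 1 0 = -negCFMat l 0 1 := by
  rw [negCFMat_reverse]
  simp [signFlip, mul_apply, vecMul, dotProduct, Fin.sum_univ_two]

theorem isCoprime_negCFMat (l : List ℤ) : IsCoprime (negCFMat l 0 0) (negCFMat l 1 0) := by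
  have hdet := det_negCFMat l
  rw [det_fin_two] at hdet
  exact ⟨negCFMat l 1 1, -negCFMat l 0 1, by linarith⟩

theorem negCFMat_mul_modEq_one (l : List ℤ) :
    negCFMat l 1 0 * -negCFMat l 0 1 ≡ 1 [ZMOD negCFMat l 0 0] := by
  have hdet := det_negCFMat l
  rw [det_fin_two] at hdet
  exact Int.modEq_iff_dvd.mpr ⟨negCFMat l 1 1, by linarith⟩

section TwoLe

variable (l : List ℤ) (hl : ∀ c ∈ l, 2 ≤ c)
include hl

theorem negCFMat_one_zero_nonneg_lt : 0 ≤ negCFMat l 1 0 ∧ negCFMat l 1 0 < negCFMat l 0 0 := by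
  induction l with
  | nil => simp
  | cons c t ih =>
    obtain ⟨h0, hlt⟩ := ih fun x hx => hl x (List.mem_cons_of_mem c hx)
    have hc := hl c List.mem_cons_self
    obtain ⟨e0, e1⟩ := negCFMat_cons_col_zero c t
    rw [e0, e1]
    constructor <;> nlinarith

theorem neg_negCFMat_zero_one_nonneg_lt :
    0 ≤ -negCFMat l 0 1 ∧ -negCFMat l 0 1 < negCFMat l 0 0 := by
  rw [← negCFMat_reverse_one_zero, ← negCFMat_reverse_zero_zero]
  exact negCFMat_one_zero_nonneg_lt l.reverse (by simpa using hl)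

theorem negCF_map_intCast : negCF (l.map (↑)) = negCFMat l 0 0 / negCFMat l 1 0 := by
  induction l with
  | nil => simp [negCF]
  | cons c t ih =>
    have ht : ∀ x ∈ t, 2 ≤ x := fun x hx => hl x (List.mem_cons_of_mem c hx)
    have hA : (negCFMat t 0 0 : ℚ) ≠ 0 := by
      have := negCFMat_one_zero_nonneg_lt t ht
      exact_mod_cast (by omega : negCFMat t 0 0 ≠ 0)
    obtain ⟨e0, e1⟩ := negCFMat_cons_col_zero c t
    rw [List.map_cons, negCF_cons, ih ht, e0, e1]
    push_cast
    field_simp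

theorem negCF_reverse_map_intCast :
    negCF (l.reverse.map (↑)) = negCFMat l 0 0 / (-negCFMat l 0 1 : ℤ) := by
  rw [negCF_map_intCast l.reverse (by simpa using hl), negCFMat_reverse_zero_zero,
    negCFMat_reverse_one_zero]

end TwoLe

theorem stmt3_general (p q qs : ℤ) (hq : 1 ≤ q) (hcop : IsCoprime p q)
    (n : ℕ) (c : ℕ → ℤ) (hc : ∀ i < n, 2 ≤ c i)
    (hcf : (p : ℚ) / q = negCF ((List.range n).map fun i => (c i : ℚ)))
    (hqs1 : 1 ≤ qs) (hqsp : qs < p) (hmod : q * qs ≡ 1 [ZMOD p]) :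
    (p : ℚ) / qs = negCF (((List.range n).map fun i => (c i : ℚ)).reverse) := by
  set l := (List.range n).map c
  have hl : ∀ x ∈ l, 2 ≤ x := by simpa [l] using hc
  have hcast : ((List.range n).map fun i => (c i : ℚ)) = l.map (↑) := by simp [l]
  rw [hcast, negCF_map_intCast l hl] at hcf
  rw [hcast, ← List.map_reverse, negCF_reverse_map_intCast l hl]
  have hden_pos : 0 < negCFMat l 1 0 := by
    refine (negCFMat_one_zero_nonneg_lt l hl).1.lt_of_ne' fun h => ?_
    rw [h, Int.cast_zero, div_zero] at hcf
    have : (0 : ℚ) < p / q := by apply div_pos <;> exact_mod_cast (by omega)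
    exact this.ne' hcf
  obtain ⟨rfl, rfl⟩ := Rat.div_int_inj (by omega) hden_pos
    (Int.isCoprime_iff_gcd_eq_one.mp hcop)
    (Int.isCoprime_iff_gcd_eq_one.mp (isCoprime_negCFMat l)) hcf
  obtain ⟨hB0, hBp⟩ := neg_negCFMat_zero_one_nonneg_lt l hl
  rw [Int.eq_of_mul_modEq_one hcop hmod (negCFMat_mul_modEq_one l) (by omega) hqsp hB0 hBp]

/-- If `p > q ≥ 1` are coprime and `p/q = [c₁, …, cₙ]⁻` with all `cᵢ ≥ 2`, and
`q*` is the unique integer with `1 ≤ q* < p` and `q·q* ≡ 1 (mod p)`, then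
`p/q* = [cₙ, …, c₁]⁻`. -/
theorem stmt3 (p q qs : ℤ) (hq : 1 ≤ q) (hpq : q < p) (hcop : IsCoprime p q)
    (n : ℕ) (hn : 1 ≤ n) (c : ℕ → ℤ) (hc : ∀ i < n, 2 ≤ c i)
    (hcf : (p : ℚ) / q = negCF ((List.range n).map fun i => (c i : ℚ)))
    (hqs1 : 1 ≤ qs) (hqsp : qs < p) (hmod : q * qs ≡ 1 [ZMOD p]) :
    (p : ℚ) / qs = negCF (((List.range n).map fun i => (c i : ℚ)).reverse) :=
  stmt3_general p q qs hq hcop n c hc hcf hqs1 hqsp hmod
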